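/- Let k/k₀ be a finite Galois extension with Γ = Gal(k/k₀), and suppose Γ acts on Λ by lattice automorphisms such that for every σ ∈ Γ, if σ(ζ) = ζ^n then σ ∘ w ∘ σ⁻¹ = w^n as automorphisms of Λ. Then for all σ ∈ Γ and α, β ∈ Λ: σ(⟨α,β⟩_w) = ⟨σ(α), σ(β)⟩_w and σ(ε_w(α,β)) = ε_w(σ(α), σ(β)). -/

import Mathlib

/-! Since `σ ζ = ζ ^ n` is again a primitive `d`-th root of unity, `n` is prime to `d`, so
`j ↦ n j mod d` permutes `{1, …, d - 1}`. Both pairings are products `∏ c_j ^ (w^j α, β)` with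
`c_j = ζ^j`, resp. `c_j = 1 - ζ^{-j}`, `d`-periodic in `j` and satisfying `σ c_j = c_{nj}`. The
relation `S w^j = w^{nj} S` then turns `σ` of the product for `(α, β)` into the product for
`(S α, S β)`, reindexed by that permutation. -/

noncomputable section

/-- The subgroup `(1-w)Λ`. -/
def coinvSub {Λ : Type*} [AddCommGroup Λ] (w : AddAut Λ) : AddSubgroup Λ :=
  AddSubgroup.closure {y | ∃ x : Λ, y = x - w x}

/-- The pairing `ε_w(α,β) = ∏_{j=1}^{d-1} (1 - ζ^{-j})^{(w^jα,β)}`. -/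
def epsw {k : Type*} [Field k] {Λ : Type*} [AddCommGroup Λ] (d : ℕ) (ζ : k)
    (B : Λ →+ Λ →+ ℤ) (w : AddAut Λ) (α β : Λ) : k :=
  ∏ j ∈ Finset.Ico 1 d, (1 - ζ ^ (-(j : ℤ))) ^ (B ((j • w) α) β)

open Finset Function

theorem Nat.bijOn_mul_mod_Ico {n d : ℕ} (hn : n.Coprime d) :
    Set.BijOn (fun j ↦ n * j % d) (Set.Ico 1 d) (Set.Ico 1 d) := by
  refine ((Set.finite_Ico 1 d).injOn_iff_bijOn_of_mapsTo ?_).mp ?_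
  · intro j ⟨hj1, hjd⟩
    refine ⟨Nat.pos_of_ne_zero fun h ↦ ?_, Nat.mod_lt _ (by omega)⟩
    have hdj : d ∣ j := hn.symm.dvd_of_dvd_mul_left (Nat.dvd_of_mod_eq_zero h)
    exact absurd (Nat.le_of_dvd hj1 hdj) (by omega)
  · intro i hi j hj hij
    have hij' : i ≡ j [MOD d] := Nat.ModEq.cancel_left_of_coprime hn.symm hij
    rwa [Nat.ModEq, Nat.mod_eq_of_lt hi.2, Nat.mod_eq_of_lt hj.2] at hij'

theorem Function.Periodic.prod_Ico_one_mul_of_coprime {M : Type*} [CommMonoid M] {g : ℕ → M}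
    {d n : ℕ} (hg : Periodic g d) (hn : n.Coprime d) :
    ∏ j ∈ Ico 1 d, g (n * j) = ∏ j ∈ Ico 1 d, g j := by
  have hbij := Nat.bijOn_mul_mod_Ico hn
  rw [← coe_Ico] at hbij
  exact prod_nbij _ (fun j hj ↦ hbij.mapsTo hj) hbij.injOn hbij.surjOn
    fun j _ ↦ (hg.map_mod_nat _).symm

theorem zpow_sum₀ {G ι : Type*} [CommGroupWithZero G] {a : G} (ha : a ≠ 0) (s : Finset ι)
    (f : ι → ℤ) : a ^ (∑ i ∈ s, f i) = ∏ i ∈ s, a ^ f i :=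
  cons_induction (by simp) (fun _ _ _ h ↦ by rw [sum_cons, prod_cons, zpow_add₀ ha, h]) s

theorem AddAut.apply_nsmul_apply_of_conj_eq {Λ : Type*} [Add Λ] {w S : AddAut Λ} {n : ℕ}
    (hSw : ∀ x, S (w ((-S) x)) = (n • w) x) (j : ℕ) (x : Λ) :
    S ((j • w) x) = ((n * j) • w) (S x) := by
  induction j generalizing x with
  | zero => simp
  | succ j ih =>
    rw [succ_nsmul, AddAut.add_apply, ih, Nat.mul_succ, add_nsmul, AddAut.add_apply, ← hSw,
      AddAut.neg_apply_self]

theorem map_prod_zpow_pairing_of_conj_eq {Λ G F : Type*} [AddCommGroup Λ] [CommGroupWithZero G]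
    [FunLike F G G] [MonoidWithZeroHomClass F G G] (σ : F) {c : ℕ → G} {d n : ℕ}
    (hc : Periodic c d) (hσc : ∀ j, σ (c j) = c (n * j)) (hn : n.Coprime d) {w S : AddAut Λ}
    (hw : d • w = 0) (B : Λ →+ Λ →+ ℤ) (hSB : ∀ a b, B (S a) (S b) = B a b)
    (hSw : ∀ x, S (w ((-S) x)) = (n • w) x) (α β : Λ) :
    σ (∏ j ∈ Ico 1 d, c j ^ B ((j • w) α) β) = ∏ j ∈ Ico 1 d, c j ^ B ((j • w) (S α)) (S β) := by
  have hg : Periodic (fun j ↦ c j ^ B ((j • w) (S α)) (S β)) d := fun j ↦ by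
    simp only [hc j, add_nsmul, hw, add_zero]
  calc σ (∏ j ∈ Ico 1 d, c j ^ B ((j • w) α) β)
      = ∏ j ∈ Ico 1 d, c (n * j) ^ B (((n * j) • w) (S α)) (S β) := by
        simp only [map_prod, map_zpow₀, hσc, ← AddAut.apply_nsmul_apply_of_conj_eq hSw, hSB]
    _ = _ := hg.prod_Ico_one_mul_of_coprime hn

theorem galois_equivariance_of_pairing_and_epsw_general
    (k : Type*) [Field k]
    (k₀ : Type*) [Field k₀] [Algebra k₀ k]
    (d : ℕ) (hd : 0 < d) (ζ : k) (hζ : IsPrimitiveRoot ζ d)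
    (Λ : Type*) [AddCommGroup Λ]
    (B : Λ →+ Λ →+ ℤ)
    (w : AddAut Λ)
    (hword : addOrderOf w = d) :
    ∀ (σ : k ≃ₐ[k₀] k) (S : AddAut Λ) (n : ℕ),
      (∀ a b : Λ, B (S a) (S b) = B a b) →
      σ ζ = ζ ^ n →
      (∀ x : Λ, S (w ((-S) x)) = (n • w) x) →
      ∀ α β : Λ,
        σ (ζ ^ (∑ j ∈ Finset.Ico 1 d, (j : ℤ) * B ((j • w) α) β)) =
          ζ ^ (∑ j ∈ Finset.Ico 1 d, (j : ℤ) * B ((j • w) (S α)) (S β)) ∧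
        σ (epsw d ζ B w α β) = epsw d ζ B w (S α) (S β) := by
  intro σ S n hSB hσζ hSw α β
  have hn : n.Coprime d := (hζ.pow_iff_coprime hd n).mp (hσζ ▸ hζ.map_of_injective σ.injective)
  have hw : d • w = 0 := hword ▸ addOrderOf_nsmul_eq_zero w
  have hpow : Periodic (ζ ^ ·) d := fun j ↦ by simp only [pow_add, hζ.pow_eq_one, mul_one]
  have hσpow (j : ℕ) : σ (ζ ^ j) = ζ ^ (n * j) := by rw [map_pow, hσζ, pow_mul]
  constructor
  · simp only [zpow_sum₀ (hζ.ne_zero hd.ne'), zpow_mul, zpow_natCast]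
    exact map_prod_zpow_pairing_of_conj_eq σ hpow hσpow hn hw B hSB hSw α β
  · have hσc (j : ℕ) : σ (1 - (ζ ^ j)⁻¹) = 1 - (ζ ^ (n * j))⁻¹ := by
      rw [map_sub, map_one, map_inv₀, hσpow]
    simp only [epsw, zpow_neg, zpow_natCast]
    exact map_prod_zpow_pairing_of_conj_eq σ (hpow.comp (fun z ↦ 1 - z⁻¹)) hσc hn hw B hSB hSw
      α β

/-- **Lemma 2.13.** Let `k/k₀` be a finite Galois extension with `Γ = Gal(k/k₀)` acting on
`Λ` by lattice automorphisms such that `σ ∘ w ∘ σ⁻¹ = w^n` whenever `σ(ζ) = ζ^n`.  Then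
`σ(⟨α,β⟩_w) = ⟨σα, σβ⟩_w` and `σ(ε_w(α,β)) = ε_w(σα, σβ)`, where
`⟨α,β⟩_w = ζ^{∑_{j=1}^{d-1} j·(w^jα,β)}`. -/
theorem galois_equivariance_of_pairing_and_epsw
    (k : Type*) [Field k] [CharZero k]
    (k₀ : Type*) [Field k₀] [Algebra k₀ k] [FiniteDimensional k₀ k] [IsGalois k₀ k]
    (d : ℕ) (hd : 0 < d) (ζ : k) (hζ : IsPrimitiveRoot ζ d)
    (Λ : Type*) [AddCommGroup Λ] [Module.Free ℤ Λ] [Module.Finite ℤ Λ]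
    (B : Λ →+ Λ →+ ℤ)
    (hBsymm : ∀ a b : Λ, B a b = B b a)
    (hBpos : ∀ a : Λ, a ≠ 0 → 0 < B a a)
    (hBgen : AddSubgroup.closure {a : Λ | B a a = 2} = ⊤)
    (w : AddAut Λ) (hwB : ∀ a b : Λ, B (w a) (w b) = B a b)
    (hword : addOrderOf w = d)
    (hell : Finite (Λ ⧸ coinvSub w)) :
    ∀ (σ : k ≃ₐ[k₀] k) (S : AddAut Λ) (n : ℕ),
      (∀ a b : Λ, B (S a) (S b) = B a b) →
      σ ζ = ζ ^ n →
      (∀ x : Λ, S (w ((-S) x)) = (n • w) x) →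
      ∀ α β : Λ,
        σ (ζ ^ (∑ j ∈ Finset.Ico 1 d, (j : ℤ) * B ((j • w) α) β)) =
          ζ ^ (∑ j ∈ Finset.Ico 1 d, (j : ℤ) * B ((j • w) (S α)) (S β)) ∧
        σ (epsw d ζ B w α β) = epsw d ζ B w (S α) (S β) :=
  galois_equivariance_of_pairing_and_epsw_general k k₀ d hd ζ hζ Λ B w hword

end
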